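/- Assume 2(1 + C·h(k)) ≤ 1 + C for every k ∼ 0. Let A_1 = {η ∈ Ω_n : η(0) = 1} and ψ(η) = (1 − η(0))·Π_{i∈Λ_n\{0}} γ_i^{η(i)}. Then the function V(η) := (L^{n,ρ}ψ)(η)/ψ(η), defined for η with η(0) = 0, is increasing on A_1^c: for all η ≤ ζ in Ω_n with η(0) = ζ(0) = 0, V(η) ≤ V(ζ). -/

import Mathlib

open scoped Classical
noncomputable section

/-- `Λ_n = [-n,n]^d ∩ ℤ^d`. -/
def Lam (d n : ℕ) : Finset (Fin d → ℤ) :=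
  Finset.Icc (fun _ => -(n : ℤ)) (fun _ => (n : ℤ))

/-- The sites of `Λ_n`. -/
abbrev Site (d n : ℕ) := {i : Fin d → ℤ // i ∈ Lam d n}

/-- `Ω_n = {0,1}^{Λ_n}` (with `Bool` for `{0,1}`, ordered by `false < true`). -/
abbrev Conf (d n : ℕ) := Site d n → Bool

/-- The nearest-neighbor relation on `ℤ^d`. -/
def Nbr {d : ℕ} (i j : Fin d → ℤ) : Prop := ∑ k, |i k - j k| = 1

/-- The origin, as a site of `Λ_n`. -/
def site0 (d n : ℕ) : Site d n :=
  ⟨0, by simp [Lam, Finset.mem_Icc, Pi.le_def]⟩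

/-- `T^{i,j}η` exchanges the coordinates `i` and `j` of `η`. -/
def exch {d n : ℕ} (i j : Site d n) (η : Conf d n) : Conf d n :=
  fun k => if k = i then η j else if k = j then η i else η k

/-- `σ^i η` flips the coordinate `i` of `η`. -/
def flp {d n : ℕ} (i : Site d n) (η : Conf d n) : Conf d n :=
  fun k => if k = i then !(η k) else η k

/-- `n(i) = #{j ∉ Λ_n : j ∼ i}` (each site of `ℤ^d` has exactly `2d` neighbors). -/
def nOut {d n : ℕ} (i : Site d n) : ℤ :=
  2 * d - ((Lam d n).filter (fun j => Nbr i.1 j)).card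

/-- `κ = √((1-ρ)/ρ)`. -/
def kap (ρ : ℝ) : ℝ := Real.sqrt ((1 - ρ) / ρ)

/-- `κ^{2η(i)-1}`. -/
def bdRate {d n : ℕ} (ρ : ℝ) (η : Conf d n) (i : Site d n) : ℝ :=
  kap ρ ^ (2 * (if η i then (1 : ℤ) else 0) - 1)

/-- The finite-volume SSEP generator with `ρ`-boundary:
`L^{n,ρ}φ(η) = Σ_{i∼j, i,j∈Λ_n}(φ(T^{i,j}η) − φ(η))
             + Σ_{i∈∂Λ_n} n(i) κ^{2η(i)−1}(φ(σ^iη) − φ(η))`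
(the sum over bonds `i ∼ j` is written as half the sum over ordered pairs). -/
def Lse {d n : ℕ} (ρ : ℝ) (φ : Conf d n → ℝ) (η : Conf d n) : ℝ :=
  (∑ i : Site d n, ∑ j : Site d n,
      if Nbr i.1 j.1 then φ (exch i j η) - φ η else 0) / 2
  + ∑ i : Site d n, (nOut i : ℝ) * bdRate ρ η i * (φ (flp i η) - φ η)

/-- `L_β^{n,ρ}φ = L^{n,ρ}φ + (β−1)(φ∘T^{0,0'} − φ)`, where `z'` plays the role of
the fixed neighbor `0'` of the origin. -/
def Lbeta {d n : ℕ} (ρ β : ℝ) (z' : Site d n) (φ : Conf d n → ℝ) (η : Conf d n) : ℝ :=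
  Lse ρ φ η + (β - 1) * (φ (exch (site0 d n) z' η) - φ η)

/-- The matrix of an operator on `Conf d n → ℝ` (entry `(η,ζ)` is the operator
applied to the indicator of `ζ`, evaluated at `η`). -/
def opMatrix {d n : ℕ} (Lop : (Conf d n → ℝ) → Conf d n → ℝ) :
    Matrix (Conf d n) (Conf d n) ℝ :=
  Matrix.of fun η ζ => Lop (fun ξ => if ξ = ζ then 1 else 0) η

/-- The stopped matrix: rows indexed by `A` are replaced by zero rows. -/
def stopped {d n : ℕ} (A : Set (Conf d n)) (M : Matrix (Conf d n) (Conf d n) ℝ) :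
    Matrix (Conf d n) (Conf d n) ℝ :=
  Matrix.of fun η ζ => if η ∈ A then 0 else M η ζ

/-- `P_η(τ_A > t) = (e^{t L̄} 1_{A^c})(η)`. -/
def surv {d n : ℕ} (A : Set (Conf d n)) (M : Matrix (Conf d n) (Conf d n) ℝ)
    (t : ℝ) (η : Conf d n) : ℝ :=
  (NormedSpace.exp (t • stopped A M)).mulVec (fun ζ => if ζ ∈ A then 0 else 1) η

/-- The product Bernoulli(`ρ`) measure on `Ω_n`. -/
def nuRho {d n : ℕ} (ρ : ℝ) (η : Conf d n) : ℝ :=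
  ∏ i, if η i then ρ else 1 - ρ

/-- The law at time `t` conditioned on survival, started from `ν_ρ`:
`T_t(ν_ρ)(φ) = [Σ_η ν_ρ(η)(e^{tL̄}(1_{A^c}φ))(η)] / [Σ_η ν_ρ(η)(e^{tL̄}1_{A^c})(η)]`. -/
def Tt {d n : ℕ} (ρ : ℝ) (A : Set (Conf d n)) (M : Matrix (Conf d n) (Conf d n) ℝ)
    (t : ℝ) (φ : Conf d n → ℝ) : ℝ :=
  (∑ η, nuRho ρ η *
      (NormedSpace.exp (t • stopped A M)).mulVec
        (fun ζ => if ζ ∈ A then 0 else φ ζ) η) /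
    ∑ η, nuRho ρ η * surv A M t η

/-- The set of nearest neighbors of `i` in `ℤ^d`, as a finset. -/
def nbrFinset {d : ℕ} (i : Fin d → ℤ) : Finset (Fin d → ℤ) :=
  (Finset.Icc (i - 1) (i + 1)).filter (fun j => Nbr i j)

/-- `γ_i = 1/(1 + C h(i))`. -/
def gam (C : ℝ) {d : ℕ} (h : (Fin d → ℤ) → ℝ) (i : Fin d → ℤ) : ℝ :=
  1 / (1 + C * h i)

/-- `ψ(η) = (1 − η(0)) Π_{i ∈ Λ_n \ {0}} γ_i^{η(i)}`. -/
def psiOne (C : ℝ) {d n : ℕ} (h : (Fin d → ℤ) → ℝ) (η : Conf d n) : ℝ :=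
  (if η (site0 d n) then 0 else 1) *
    ∏ i : Site d n,
      if i = site0 d n then 1 else if η i then gam C h i.1 else 1

/-! Adding a particle at a site `k ≠ 0` multiplies `ψ` by `γ_k`, so it suffices to show
`γ_k · Lψ(η) ≤ Lψ(η + δ_k)` and to add the particles of `ζ` one at a time. All terms of the
generator not involving `k` scale by `γ_k`. For a bond `{k, j}` the defect is at least
`γ_k² C ψ(η) (h(k) − h(j))`: with equality if `j` is occupied, by convexity of `x ↦ 1/x` if
`j ≠ 0` is empty, and by `2(1 + C h(k)) ≤ 1 + C` if `j = 0`. Since `h` is harmonic off the origin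
and vanishes outside `Λ_n`, these bounds add up to `−n(k) γ_k² C h(k) ψ(η)`, which is outweighed by
the boundary term at `k`, equal to `n(k) γ_k C h(k) ψ(η) (κ + γ_k/κ)`, because `κ + γ/κ ≥ γ`. -/

section Lattice

variable {d n : ℕ}

lemma Nbr.symm {i j : Fin d → ℤ} (hij : Nbr i j) : Nbr j i := by
  simpa only [Nbr, abs_sub_comm] using hij

lemma Nbr.irrefl (i : Fin d → ℤ) : ¬ Nbr i i := by
  simp [Nbr]

lemma Nbr.abs_sub_le_one {i j : Fin d → ℤ} (hij : Nbr i j) (c : Fin d) : |i c - j c| ≤ 1 :=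
  hij ▸ Finset.single_le_sum (fun c _ => abs_nonneg (i c - j c)) (Finset.mem_univ c)

lemma Nbr.exists_eq_update {i j : Fin d → ℤ} (hij : Nbr i j) :
    ∃ c, ∃ s ∈ ({1, -1} : Finset ℤ), j = Function.update i c (i c + s) := by
  obtain ⟨c, hc⟩ : ∃ c, i c ≠ j c := by
    by_contra! hij'
    simp [Nbr, hij'] at hij
  have hc1 : |i c - j c| = 1 :=
    le_antisymm (hij.abs_sub_le_one c) (Int.one_le_abs (sub_ne_zero.2 hc))
  have hrest : ∑ c' ∈ Finset.univ.erase c, |i c' - j c'| = 0 := by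
    have := Finset.add_sum_erase Finset.univ (fun c => |i c - j c|) (Finset.mem_univ c)
    rw [hc1] at this
    exact add_eq_left.1 (this.trans hij)
  refine ⟨c, j c - i c, ?_, funext fun c' => ?_⟩
  · rcases abs_eq (zero_le_one' ℤ) |>.1 hc1 with h | h <;> simp <;> omega
  · by_cases hc' : c' = c
    · subst hc'; simp
    · have := (Finset.sum_eq_zero_iff_of_nonneg fun _ _ => abs_nonneg _).1 hrest c'
        (Finset.mem_erase.2 ⟨hc', Finset.mem_univ _⟩)
      rw [Function.update_of_ne hc']
      linarith [abs_eq_zero.1 this]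

lemma card_filter_nbr_le (s : Finset (Fin d → ℤ)) (i : Fin d → ℤ) :
    (s.filter fun j => Nbr i j).card ≤ 2 * d :=
  calc (s.filter fun j => Nbr i j).card
      ≤ ((Finset.univ ×ˢ ({1, -1} : Finset ℤ)).image
          fun p => Function.update i p.1 (i p.1 + p.2)).card := by
        refine Finset.card_le_card fun j hj => ?_
        obtain ⟨c, s, hs, rfl⟩ := (Finset.mem_filter.1 hj).2.exists_eq_update
        exact Finset.mem_image.2 ⟨(c, s), by simp [hs], rfl⟩
    _ ≤ _ := Finset.card_image_le
    _ = 2 * d := by simp [mul_comm]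

lemma nOut_nonneg (k : Site d n) : (0 : ℝ) ≤ nOut k := by
  have := card_filter_nbr_le (Lam d n) k.1
  have : (0 : ℤ) ≤ nOut k := by unfold nOut; omega
  exact_mod_cast this

lemma filter_nbr_subset_nbrFinset (s : Finset (Fin d → ℤ)) (i : Fin d → ℤ) :
    s.filter (Nbr i) ⊆ nbrFinset i := by
  intro j hj
  have hij := (Finset.mem_filter.1 hj).2
  refine Finset.mem_filter.2 ⟨Finset.mem_Icc.2 ⟨fun c => ?_, fun c => ?_⟩, hij⟩ <;>
  · have := abs_le.1 (hij.abs_sub_le_one c)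
    simp only [Pi.sub_apply, Pi.add_apply, Pi.one_apply]
    omega

lemma sum_site_ite_nbr (i : Fin d → ℤ) (F : (Fin d → ℤ) → ℝ) :
    ∑ j : Site d n, (if Nbr i j.1 then F j.1 else 0) = ∑ j ∈ (Lam d n).filter (Nbr i), F j := by
  rw [Finset.sum_filter]
  exact Finset.sum_coe_sort (Lam d n) fun j => if Nbr i j then F j else 0

lemma sum_nbr_sub_eq_neg_nOut_mul {h : (Fin d → ℤ) → ℝ}
    (hout : ∀ i ∉ Lam d n, h i = 0)
    (hharm : ∀ i ∈ Lam d n, i ≠ 0 → 2 * (d : ℝ) * h i = ∑ j ∈ nbrFinset i, h j)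
    (k : Site d n) (hk : k.1 ≠ 0) :
    ∑ j : Site d n, (if Nbr k.1 j.1 then h k.1 - h j.1 else 0) = -(nOut k * h k.1) := by
  have hsum : ∑ j ∈ (Lam d n).filter (Nbr k.1), h j = 2 * d * h k.1 := by
    rw [Finset.sum_subset (filter_nbr_subset_nbrFinset _ _) fun j hj hj' =>
      hout j fun hjL => hj' (Finset.mem_filter.2 ⟨hjL, (Finset.mem_filter.1 hj).2⟩)]
    exact (hharm k.1 k.2 hk).symm
  rw [sum_site_ite_nbr k.1 fun j => h k.1 - h j, Finset.sum_sub_distrib, Finset.sum_const, hsum,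
    nOut]
  push_cast
  ring

end Lattice

section Generator

variable {d n : ℕ}

lemma exch_comm (i j : Site d n) (ξ : Conf d n) : exch i j ξ = exch j i ξ := by
  funext k
  unfold exch
  by_cases hi : k = i <;> by_cases hj : k = j <;> simp_all

lemma exch_of_eq {i j : Site d n} {ξ : Conf d n} (hij : ξ i = ξ j) : exch i j ξ = ξ := by
  funext k
  unfold exch
  by_cases hi : k = i <;> by_cases hj : k = j <;> simp_all

lemma exch_update_of_ne {i j k : Site d n} (hki : k ≠ i) (hkj : k ≠ j) (ξ : Conf d n) (b : Bool) :
    exch i j (Function.update ξ k b) = Function.update (exch i j ξ) k b := by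
  funext m
  unfold exch
  by_cases hi : m = i <;> by_cases hj : m = j <;> by_cases hk : m = k <;>
    simp_all [Ne.symm hki, Ne.symm hkj]

lemma exch_update_left {k j : Site d n} (hkj : k ≠ j) {ξ : Conf d n} (hξ : ξ k = ξ j) (b : Bool) :
    exch k j (Function.update ξ k b) = Function.update ξ j b := by
  funext m
  unfold exch
  by_cases hk : m = k <;> by_cases hj : m = j <;> simp_all [Ne.symm hkj]

lemma flp_eq_update (k : Site d n) (ξ : Conf d n) : flp k ξ = Function.update ξ k (!ξ k) := by
  funext m
  unfold flp
  by_cases hk : m = k <;> simp_all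

lemma flp_update_of_ne {i k : Site d n} (hki : k ≠ i) (ξ : Conf d n) (b : Bool) :
    flp i (Function.update ξ k b) = Function.update (flp i ξ) k b := by
  rw [flp_eq_update, flp_eq_update, Function.update_of_ne hki.symm, Function.update_comm hki.symm]

def bondTerm (φ : Conf d n → ℝ) (ξ : Conf d n) (i j : Site d n) : ℝ :=
  if Nbr i.1 j.1 then φ (exch i j ξ) - φ ξ else 0

def boundaryTerm (ρ : ℝ) (φ : Conf d n → ℝ) (ξ : Conf d n) (i : Site d n) : ℝ :=
  nOut i * bdRate ρ ξ i * (φ (flp i ξ) - φ ξ)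

lemma bondTerm_of_nbr (φ : Conf d n → ℝ) (ξ : Conf d n) {i j : Site d n} (hij : Nbr i.1 j.1) :
    bondTerm φ ξ i j = φ (exch i j ξ) - φ ξ :=
  if_pos hij

lemma bondTerm_comm (φ : Conf d n → ℝ) (ξ : Conf d n) (i j : Site d n) :
    bondTerm φ ξ i j = bondTerm φ ξ j i := by
  unfold bondTerm
  by_cases hij : Nbr i.1 j.1
  · rw [if_pos hij, if_pos hij.symm, exch_comm]
  · rw [if_neg hij, if_neg fun hji => hij hji.symm]

lemma bondTerm_self (φ : Conf d n → ℝ) (ξ : Conf d n) (i : Site d n) : bondTerm φ ξ i i = 0 :=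
  if_neg (Nbr.irrefl i.1)

lemma sum_sum_eq_two_mul_sum_of_eq_zero {α : Type*} [Fintype α] [DecidableEq α]
    {D : α → α → ℝ} (k : α) (hzero : ∀ i j, i ≠ k → j ≠ k → D i j = 0)
    (hsymm : ∀ i j, D i j = D j i) (hkk : D k k = 0) :
    ∑ i, ∑ j, D i j = 2 * ∑ j, D k j := by
  have hrow : ∀ i ∈ Finset.univ.erase k, ∑ j, D i j = D k i := fun i hi =>
    (Finset.sum_eq_single k (fun j _ hj => hzero i j (Finset.ne_of_mem_erase hi) hj)
      (by simp)).trans (hsymm i k)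
  rw [← Finset.add_sum_erase _ _ (Finset.mem_univ k), Finset.sum_congr rfl hrow,
    Finset.sum_erase _ hkk]
  ring

/-- The ordered double sum counts each bond at `k` twice, cancelling the `1/2` in `Lse`. -/
lemma Lse_sub_mul_eq (ρ : ℝ) (φ : Conf d n → ℝ) (η ζ : Conf d n) (k : Site d n) (c : ℝ)
    (hbond : ∀ i j, i ≠ k → j ≠ k → bondTerm φ ζ i j = c * bondTerm φ η i j)
    (hbdry : ∀ i, i ≠ k → boundaryTerm ρ φ ζ i = c * boundaryTerm ρ φ η i) :
    Lse ρ φ ζ - c * Lse ρ φ η =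
      ∑ j, (bondTerm φ ζ k j - c * bondTerm φ η k j) +
        (boundaryTerm ρ φ ζ k - c * boundaryTerm ρ φ η k) := by
  have hbonds := sum_sum_eq_two_mul_sum_of_eq_zero
    (D := fun i j => bondTerm φ ζ i j - c * bondTerm φ η i j) k
    (fun i j hi hj => by simp only [hbond i j hi hj, sub_self])
    (fun i j => by simp only [bondTerm_comm φ _ i j])
    (by simp only [bondTerm_self, mul_zero, sub_self])
  have hbdrys : ∑ i, (boundaryTerm ρ φ ζ i - c * boundaryTerm ρ φ η i) =
      boundaryTerm ρ φ ζ k - c * boundaryTerm ρ φ η k :=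
    Finset.sum_eq_single k (fun i _ hi => by rw [hbdry i hi, sub_self]) (by simp)
  change (∑ i, ∑ j, bondTerm φ ζ i j) / 2 + ∑ i, boundaryTerm ρ φ ζ i -
    c * ((∑ i, ∑ j, bondTerm φ η i j) / 2 + ∑ i, boundaryTerm ρ φ η i) = _
  simp only [Finset.sum_sub_distrib, ← Finset.mul_sum] at hbonds hbdrys ⊢
  linear_combination hbonds / 2 + hbdrys

end Generator

lemma monotoneOn_of_le_update_true {α β : Type*} [Fintype α] [DecidableEq α] [Preorder β]
    {S : Set (α → Bool)} (hS : IsLowerSet S) {f : (α → Bool) → β}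
    (hf : ∀ ξ ∈ S, ∀ k, ξ k = false → Function.update ξ k true ∈ S →
      f ξ ≤ f (Function.update ξ k true)) :
    MonotoneOn f S := by
  suffices H : ∀ s : Finset α, ∀ η ζ, η ≤ ζ → ζ ∈ S → (∀ i ∉ s, η i = ζ i) → f η ≤ f ζ from
    fun η _ ζ hζ hle => H Finset.univ η ζ hle hζ (by simp)
  intro s
  induction s using Finset.induction_on with
  | empty => exact fun η ζ _ _ heq => (funext fun i => heq i (Finset.notMem_empty i)) ▸ le_rfl
  | insert a s _ ih =>
    intro η ζ hle hζ heq
    have hle' : Function.update η a (ζ a) ≤ ζ := fun i => by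
      by_cases hi : i = a
      · subst hi; simp
      · simpa [hi] using hle i
    refine le_trans ?_ (ih _ ζ hle' hζ fun i hi => ?_)
    · by_cases ha : η a = ζ a
      · rw [← ha, Function.update_eq_self]
      · obtain ⟨hηa, hζa⟩ := Bool.lt_iff.1 (lt_of_le_of_ne (hle a) ha)
        rw [hζa] at hle' ⊢
        exact hf η (hS hle hζ) a hηa (hS hle' hζ)
    · by_cases hia : i = a
      · subst hia; simp
      · simpa [hia] using heq i (by simp [hia, hi])

lemma inv_sq_mul_sub_le_inv_sub_inv {a b : ℝ} (ha : 0 < a) (hb : 0 < b) :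
    a⁻¹ ^ 2 * (a - b) ≤ b⁻¹ - a⁻¹ := by
  have hsq : b⁻¹ - a⁻¹ - a⁻¹ ^ 2 * (a - b) = b⁻¹ * (1 - a⁻¹ * b) ^ 2 := by
    field_simp
  linarith [mul_nonneg (inv_nonneg.2 hb.le) (sq_nonneg (1 - a⁻¹ * b))]

lemma le_add_mul_inv_of_le_four {κ γ : ℝ} (hκ : 0 < κ) (hγ : 0 ≤ γ) (hγ4 : γ ≤ 4) :
    γ ≤ κ + γ * κ⁻¹ := by
  have hsq : κ + γ * κ⁻¹ - γ = ((κ - γ / 2) ^ 2 + γ * (4 - γ) / 4) * κ⁻¹ := by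
    field_simp
    ring
  have : 0 ≤ ((κ - γ / 2) ^ 2 + γ * (4 - γ) / 4) * κ⁻¹ :=
    mul_nonneg (add_nonneg (sq_nonneg _) (by nlinarith)) (inv_nonneg.2 hκ.le)
  linarith

section Psi

variable {d n : ℕ} {C : ℝ} {h : (Fin d → ℤ) → ℝ}

lemma one_add_mul_pos (hC : 0 ≤ C) (hh : ∀ i, 0 ≤ h i) (i : Fin d → ℤ) : 0 < 1 + C * h i := by
  have := mul_nonneg hC (hh i)
  linarith

lemma gam_pos (hC : 0 ≤ C) (hh : ∀ i, 0 ≤ h i) (i : Fin d → ℤ) : 0 < gam C h i :=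
  one_div_pos.2 (one_add_mul_pos hC hh i)

lemma gam_le_one (hC : 0 ≤ C) (hh : ∀ i, 0 ≤ h i) (i : Fin d → ℤ) : gam C h i ≤ 1 :=
  div_le_one_of_le₀ (by linarith [mul_nonneg hC (hh i)]) (one_add_mul_pos hC hh i).le

lemma gam_mul_one_add (hC : 0 ≤ C) (hh : ∀ i, 0 ≤ h i) (i : Fin d → ℤ) :
    gam C h i * (1 + C * h i) = 1 :=
  one_div_mul_cancel (one_add_mul_pos hC hh i).ne'

lemma psiOne_pos (hC : 0 ≤ C) (hh : ∀ i, 0 ≤ h i) {ξ : Conf d n} (hξ : ξ (site0 d n) = false) :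
    0 < psiOne C h ξ := by
  rw [psiOne, hξ, if_neg Bool.false_ne_true, one_mul]
  refine Finset.prod_pos fun i _ => ?_
  split_ifs
  exacts [one_pos, gam_pos hC hh i.1, one_pos]

lemma psiOne_of_origin {ξ : Conf d n} (hξ : ξ (site0 d n) = true) : psiOne C h ξ = 0 := by
  simp [psiOne, hξ]

lemma psiOne_update_true {ξ : Conf d n} {k : Site d n} (hk : k ≠ site0 d n) (hξk : ξ k = false) :
    psiOne C h (Function.update ξ k true) = gam C h k.1 * psiOne C h ξ := by
  simp only [psiOne, Function.update_of_ne hk.symm]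
  rw [← Finset.mul_prod_erase _ _ (Finset.mem_univ k),
    ← Finset.mul_prod_erase _ _ (Finset.mem_univ k),
    Finset.prod_congr rfl fun i hi => by rw [Function.update_of_ne (Finset.ne_of_mem_erase hi)]]
  simp only [hk, hξk, Function.update_self, if_true, if_false, Bool.false_eq_true]
  ring

end Psi

section AddParticle

variable {d n : ℕ} {C : ℝ} {h : (Fin d → ℤ) → ℝ} {η : Conf d n} {k : Site d n}

lemma bondTerm_psiOne_update_of_ne (hk : k ≠ site0 d n) (hηk : η k = false) {i j : Site d n}
    (hik : i ≠ k) (hjk : j ≠ k) :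
    bondTerm (psiOne C h) (Function.update η k true) i j =
      gam C h k.1 * bondTerm (psiOne C h) η i j := by
  unfold bondTerm
  split_ifs
  · rw [exch_update_of_ne hik.symm hjk.symm, psiOne_update_true hk, psiOne_update_true hk hηk,
      mul_sub]
    unfold exch
    simp [hik.symm, hjk.symm, hηk]
  · rw [mul_zero]

lemma boundaryTerm_psiOne_update_of_ne (ρ : ℝ) (hk : k ≠ site0 d n) (hηk : η k = false)
    {i : Site d n} (hik : i ≠ k) :
    boundaryTerm ρ (psiOne C h) (Function.update η k true) i =
      gam C h k.1 * boundaryTerm ρ (psiOne C h) η i := by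
  have hflp : flp i η k = false := by rw [flp_eq_update, Function.update_of_ne hik.symm, hηk]
  unfold boundaryTerm bdRate
  rw [flp_update_of_ne hik.symm, psiOne_update_true hk hflp, psiOne_update_true hk hηk,
    Function.update_of_ne hik]
  ring

lemma boundaryTerm_psiOne_update_self (ρ : ℝ) (hk : k ≠ site0 d n) (hηk : η k = false) :
    boundaryTerm ρ (psiOne C h) (Function.update η k true) k -
        gam C h k.1 * boundaryTerm ρ (psiOne C h) η k =
      nOut k * psiOne C h η * (1 - gam C h k.1) * (kap ρ + gam C h k.1 * (kap ρ)⁻¹) := by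
  have hflp : flp k (Function.update η k true) = η := by
    rw [flp_eq_update, Function.update_idem, Function.update_self, Bool.not_true, ← hηk,
      Function.update_eq_self]
  unfold boundaryTerm bdRate
  rw [hflp, flp_eq_update, hηk, Bool.not_false, psiOne_update_true hk hηk, Function.update_self]
  norm_num
  ring

lemma bondTerm_psiOne_update_origin (hk : k ≠ site0 d n) (hηk : η k = false)
    (hη0 : η (site0 d n) = false) (hnbr : Nbr k.1 (site0 d n).1) :
    bondTerm (psiOne C h) (Function.update η k true) k (site0 d n) -
        gam C h k.1 * bondTerm (psiOne C h) η k (site0 d n) =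
      -(gam C h k.1 * psiOne C h η) := by
  rw [bondTerm_of_nbr _ _ hnbr, bondTerm_of_nbr _ _ hnbr, exch_update_left hk (hηk.trans hη0.symm),
    exch_of_eq (hηk.trans hη0.symm),
    psiOne_of_origin (Function.update_self _ _ _), psiOne_update_true hk hηk]
  ring

lemma bondTerm_psiOne_update_occupied (hC : 0 ≤ C) (hh : ∀ i, 0 ≤ h i) (hk : k ≠ site0 d n)
    (hηk : η k = false) {j : Site d n} (hj : j ≠ site0 d n) (hηj : η j = true)
    (hnbr : Nbr k.1 j.1) :
    bondTerm (psiOne C h) (Function.update η k true) k j -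
        gam C h k.1 * bondTerm (psiOne C h) η k j =
      gam C h k.1 * (1 - gam C h k.1 * (1 + C * h j.1)) * psiOne C h η := by
  have hkj : k ≠ j := by
    rintro rfl
    exact Nbr.irrefl _ hnbr
  set ξ := Function.update η j false
  have hηξ : η = Function.update ξ j true := by simp [ξ, ← hηj]
  have hξk : ξ k = false := by simp [ξ, hkj, hηk]
  have hψξ : psiOne C h ξ = (1 + C * h j.1) * psiOne C h η := by
    rw [hηξ, psiOne_update_true hj (Function.update_self _ _ _), ← mul_assoc,
      mul_comm (1 + _), gam_mul_one_add hC hh, one_mul]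
  rw [bondTerm_of_nbr _ _ hnbr, bondTerm_of_nbr _ _ hnbr,
    exch_of_eq (by rw [Function.update_self, Function.update_of_ne hkj.symm, hηj]),
    hηξ, exch_comm, exch_update_left hkj.symm (by simp [ξ, hkj, hηk]), ← hηξ,
    psiOne_update_true hk hξk, hψξ]
  ring

lemma bondTerm_psiOne_update_vacant (hk : k ≠ site0 d n) (hηk : η k = false) {j : Site d n}
    (hj : j ≠ site0 d n) (hηj : η j = false) (hnbr : Nbr k.1 j.1) :
    bondTerm (psiOne C h) (Function.update η k true) k j -
        gam C h k.1 * bondTerm (psiOne C h) η k j =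
      (gam C h j.1 - gam C h k.1) * psiOne C h η := by
  have hkj : k ≠ j := by
    rintro rfl
    exact Nbr.irrefl _ hnbr
  rw [bondTerm_of_nbr _ _ hnbr, bondTerm_of_nbr _ _ hnbr, exch_of_eq (hηk.trans hηj.symm),
    exch_update_left hkj (hηk.trans hηj.symm), psiOne_update_true hj hηj, psiOne_update_true hk hηk]
  ring

lemma bondTerm_psiOne_update_sub_ge (hC : 0 ≤ C) (hh : ∀ i, 0 ≤ h i) (h0 : h 0 = 1)
    (hC2 : ∀ k : Fin d → ℤ, Nbr (0 : Fin d → ℤ) k → 2 * (1 + C * h k) ≤ 1 + C)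
    (hη0 : η (site0 d n) = false) (hk : k ≠ site0 d n) (hηk : η k = false) (j : Site d n) :
    gam C h k.1 ^ 2 * C * psiOne C h η * (if Nbr k.1 j.1 then h k.1 - h j.1 else 0) ≤
      bondTerm (psiOne C h) (Function.update η k true) k j -
        gam C h k.1 * bondTerm (psiOne C h) η k j := by
  have hψ := psiOne_pos hC hh hη0
  have hγ := gam_mul_one_add hC hh k.1
  by_cases hnbr : Nbr k.1 j.1
  swap
  · simp [bondTerm, hnbr]
  rw [if_pos hnbr]
  by_cases hj : j = site0 d n
  · subst hj
    have h1 : h (site0 d n).1 = 1 := h0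
    have h2 := hC2 k.1 hnbr.symm
    have h3 : 0 ≤ gam C h k.1 ^ 2 * psiOne C h η := mul_nonneg (sq_nonneg _) hψ.le
    rw [bondTerm_psiOne_update_origin hk hηk hη0 hnbr, h1]
    have h4 : gam C h k.1 ^ 2 * C * psiOne C h η * (h k.1 - 1) + gam C h k.1 * psiOne C h η =
        gam C h k.1 ^ 2 * psiOne C h η * (1 + 2 * C * h k.1 - C) := by
      linear_combination (-(gam C h k.1 * psiOne C h η)) * hγ
    linarith [mul_nonpos_of_nonneg_of_nonpos h3 (by linarith : 1 + 2 * C * h k.1 - C ≤ 0)]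
  cases hηj : η j
  · rw [bondTerm_psiOne_update_vacant hk hηk hj hηj hnbr]
    have := inv_sq_mul_sub_le_inv_sub_inv (one_add_mul_pos hC hh k.1) (one_add_mul_pos hC hh j.1)
    calc gam C h k.1 ^ 2 * C * psiOne C h η * (h k.1 - h j.1)
        = (1 + C * h k.1)⁻¹ ^ 2 * ((1 + C * h k.1) - (1 + C * h j.1)) * psiOne C h η := by
          rw [gam, one_div]
          ring
      _ ≤ ((1 + C * h j.1)⁻¹ - (1 + C * h k.1)⁻¹) * psiOne C h η :=
          mul_le_mul_of_nonneg_right this hψ.le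
      _ = (gam C h j.1 - gam C h k.1) * psiOne C h η := by simp only [gam, one_div]
  · rw [bondTerm_psiOne_update_occupied hC hh hk hηk hj hηj hnbr]
    exact le_of_eq (by linear_combination (gam C h k.1 * psiOne C h η) * hγ)

theorem gam_mul_Lse_psiOne_le_Lse_update {ρ : ℝ} (hρ : ρ ∈ Set.Ioo (0 : ℝ) 1) (hC : 0 ≤ C)
    (hh : ∀ i, 0 ≤ h i) (h0 : h 0 = 1) (hout : ∀ i ∉ Lam d n, h i = 0)
    (hharm : ∀ i ∈ Lam d n, i ≠ 0 → 2 * (d : ℝ) * h i = ∑ j ∈ nbrFinset i, h j)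
    (hC2 : ∀ k : Fin d → ℤ, Nbr (0 : Fin d → ℤ) k → 2 * (1 + C * h k) ≤ 1 + C)
    (hη0 : η (site0 d n) = false) (hk : k ≠ site0 d n) (hηk : η k = false) :
    gam C h k.1 * Lse ρ (psiOne C h) η ≤ Lse ρ (psiOne C h) (Function.update η k true) := by
  set γ := gam C h k.1
  set ψ := psiOne C h η
  have hsplit := Lse_sub_mul_eq ρ (psiOne C h) η (Function.update η k true) k γ
    (fun i j hi hj => bondTerm_psiOne_update_of_ne hk hηk hi hj)
    (fun i hi => boundaryTerm_psiOne_update_of_ne ρ hk hηk hi)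
  have hbonds : -(nOut k * h k.1) * (γ ^ 2 * C * ψ) ≤
      ∑ j, (bondTerm (psiOne C h) (Function.update η k true) k j -
        γ * bondTerm (psiOne C h) η k j) := by
    rw [← sum_nbr_sub_eq_neg_nOut_mul hout hharm k fun hk0 => hk (Subtype.ext hk0), Finset.sum_mul]
    exact Finset.sum_le_sum fun j _ =>
      (mul_comm _ _).trans_le (bondTerm_psiOne_update_sub_ge hC hh h0 hC2 hη0 hk hηk j)
  have hγ : 1 - γ = γ * C * h k.1 := by linear_combination -gam_mul_one_add hC hh k.1
  have hκ : 0 < kap ρ := Real.sqrt_pos.2 (div_pos (sub_pos.2 hρ.2) hρ.1)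
  have hbracket := le_add_mul_inv_of_le_four hκ (gam_pos hC hh k.1).le
    (by linarith [gam_le_one hC hh k.1])
  have hpos : 0 ≤ nOut k * ψ * (γ * C * h k.1) * (kap ρ + γ * (kap ρ)⁻¹ - γ) :=
    mul_nonneg (mul_nonneg (mul_nonneg (nOut_nonneg k) (psiOne_pos hC hh hη0).le)
      (mul_nonneg (mul_nonneg (gam_pos hC hh k.1).le hC) (hh k.1))) (sub_nonneg.2 hbracket)
  rw [boundaryTerm_psiOne_update_self ρ hk hηk, hγ] at hsplit
  linarith

theorem div_psiOne_le_div_psiOne_update {ρ : ℝ} (hρ : ρ ∈ Set.Ioo (0 : ℝ) 1) (hC : 0 ≤ C)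
    (hh : ∀ i, 0 ≤ h i) (h0 : h 0 = 1) (hout : ∀ i ∉ Lam d n, h i = 0)
    (hharm : ∀ i ∈ Lam d n, i ≠ 0 → 2 * (d : ℝ) * h i = ∑ j ∈ nbrFinset i, h j)
    (hC2 : ∀ k : Fin d → ℤ, Nbr (0 : Fin d → ℤ) k → 2 * (1 + C * h k) ≤ 1 + C)
    (hη0 : η (site0 d n) = false) (hk : k ≠ site0 d n) (hηk : η k = false) :
    Lse ρ (psiOne C h) η / psiOne C h η ≤
      Lse ρ (psiOne C h) (Function.update η k true) / psiOne C h (Function.update η k true) := by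
  have hγ := gam_pos hC hh k.1
  have hψ := psiOne_pos hC hh hη0
  calc Lse ρ (psiOne C h) η / psiOne C h η
      = gam C h k.1 * Lse ρ (psiOne C h) η / (gam C h k.1 * psiOne C h η) :=
        (mul_div_mul_left _ _ hγ.ne').symm
    _ ≤ Lse ρ (psiOne C h) (Function.update η k true) / (gam C h k.1 * psiOne C h η) :=
        div_le_div_of_nonneg_right
          (gam_mul_Lse_psiOne_le_Lse_update hρ hC hh h0 hout hharm hC2 hη0 hk hηk)
          (mul_pos hγ hψ).le
    _ = _ := by rw [psiOne_update_true hk hηk]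

end AddParticle

theorem potential_increasing_A1_general
    {d n : ℕ}
    (ρ : ℝ) (hρ : ρ ∈ Set.Ioo (0 : ℝ) 1)
    (h : (Fin d → ℤ) → ℝ)
    (h01 : ∀ i, h i ∈ Set.Icc (0 : ℝ) 1)
    (h0 : h 0 = 1)
    (hout : ∀ i ∉ Lam d n, h i = 0)
    (hharm : ∀ i ∈ Lam d n, i ≠ 0 → 2 * (d : ℝ) * h i = ∑ j ∈ nbrFinset i, h j)
    (C : ℝ) (hC : 0 < C)
    (hC2 : ∀ k : Fin d → ℤ, Nbr (0 : Fin d → ℤ) k → 2 * (1 + C * h k) ≤ 1 + C) :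
    ∀ η ζ : Conf d n, η ≤ ζ →
      η (site0 d n) = false → ζ (site0 d n) = false →
      Lse ρ (psiOne C h) η / psiOne C h η ≤ Lse ρ (psiOne C h) ζ / psiOne C h ζ := by
  have hh : ∀ i, 0 ≤ h i := fun i => (h01 i).1
  have hS : IsLowerSet {ξ : Conf d n | ξ (site0 d n) = false} := fun _ _ hle hξ =>
    le_antisymm ((hle _).trans_eq hξ) (Bool.false_le _)
  intro η ζ hle hη hζ
  refine monotoneOn_of_le_update_true (f := fun ξ => Lse ρ (psiOne C h) ξ / psiOne C h ξ) hS
    (fun ξ hξ k hξk hk => ?_) hη hζ hle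
  have hk0 : k ≠ site0 d n := by
    rintro rfl
    simp at hk
  exact div_psiOne_le_div_psiOne_update hρ hC.le hh h0 hout hharm hC2 hξ hk0 hξk

/-- **Key step in the proof of Proposition 1.3.**  For `A₁ = {η : η(0) = 1}`, if
`2(1 + C h(k)) ≤ 1 + C` for every `k ∼ 0`, then `V = L^{n,ρ}ψ/ψ` is increasing on
`A₁^c`. -/
theorem potential_increasing_A1
    {d n : ℕ} (hd : 1 ≤ d) (hn : 2 ≤ n)
    (ρ : ℝ) (hρ : ρ ∈ Set.Ioo (0 : ℝ) 1)
    (h : (Fin d → ℤ) → ℝ)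
    (h01 : ∀ i, h i ∈ Set.Icc (0 : ℝ) 1)
    (h0 : h 0 = 1)
    (hout : ∀ i ∉ Lam d n, h i = 0)
    (hharm : ∀ i ∈ Lam d n, i ≠ 0 → 2 * (d : ℝ) * h i = ∑ j ∈ nbrFinset i, h j)
    (C : ℝ) (hC : 0 < C)
    (hC2 : ∀ k : Fin d → ℤ, Nbr (0 : Fin d → ℤ) k → 2 * (1 + C * h k) ≤ 1 + C) :
    ∀ η ζ : Conf d n, η ≤ ζ →
      η (site0 d n) = false → ζ (site0 d n) = false →
      Lse ρ (psiOne C h) η / psiOne C h η ≤ Lse ρ (psiOne C h) ζ / psiOne C h ζ :=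
  potential_increasing_A1_general ρ hρ h h01 h0 hout hharm C hC hC2
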